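/- arXiv:1708.02966 — 3 statements merged into one kernel-verified Lean document; each statement's English description precedes it below -/
import Mathlib

section
/- In the sparse sign-consistent JL construction, suppose x ∈ ℝⁿ is a unit vector with |x_1| ≥ |x_2| ≥ … ≥ |x_n|, p is an integer with 2 ≤ p ≤ n, and B := m/s². Then there is a universal constant C > 0 such that: if B ≥ e then ‖∑_{i=1}^p ∑_{j≤p, j≠i} |Q_{i,j} x_i x_j|‖_p ≤ C·p/log B, and if B < e then ‖∑_{i=1}^p ∑_{j≤p, j≠i} |Q_{i,j} x_i x_j|‖_p ≤ C·p/B. -/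
/-!
Let `Y` be the block sum and `R i = ∑_{j < p, j ≠ i} Q i j`. By AM–GM and the symmetry of `Q`,
`Y ≤ ∑ i, x i ^ 2 * R i ≤ max_i R i`, so `E[Y^p] ≤ ∑_i E[R i ^ p]`. Expanding
`R i ^ p` over `p`-tuples of entries `(r, j)`, a tuple whose entries form a set `b` spread over the
rows `L` contributes at most `(s/m)^(|L| + |b|)` (independence of the columns and negative
correlation within a column, after collapsing repeated `{0,1}`-factors), and nothing when
`|L| > s` since every column has exactly `s` ones. Grouping the sets `b` by `l = |L|` and `k = |b|`
and bounding binomial coefficients with `n! ≥ (n/e)^n`, each of the at most `p²` classes contributes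
`k^(p-k) (e² p / B)^k ≤ (e³ p ρ(B))^p`, where `B = m/s²` and `ρ(B)` is `1 / log B` for `B ≥ e` and
`1 / B` otherwise. Hence `E[Y^p] ≤ p³ (e³ p ρ(B))^p ≤ (e⁶ p ρ(B))^p`.
-/

open MeasureTheory ProbabilityTheory Finset Real

/-- The `p`-th moment norm `(E|Y|^p)^(1/p)` of a real random variable. -/
noncomputable def pnorm {Ω : Type*} [MeasureSpace Ω] (Y : Ω → ℝ) (p : ℝ) : ℝ :=
  (∫ ω, |Y ω| ^ p) ^ (1 / p)

/-- The hash variables `η` of the sparse, sign-consistent JL construction. -/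
structure EtaSSCJL (Ω : Type) [MeasureSpace Ω] (n m s : ℕ) where
  η : Fin m → Fin n → Ω → ℝ
  meas_eta : ∀ r i, Measurable (η r i)
  eta01 : ∀ r i ω, η r i ω = 0 ∨ η r i ω = 1
  eta_mean : ∀ r i, ∫ ω, η r i ω = (s : ℝ) / m
  cols_indep : iIndepFun (fun i ω => fun r => η r i ω) ℙ
  col_sum : ∀ i, ∀ᵐ ω : Ω, ∑ r, η r i ω = (s : ℝ)
  neg_corr : ∀ (S : Finset (Fin m)) (i : Fin n), ∫ ω, ∏ r ∈ S, η r i ω ≤ ((s : ℝ) / m) ^ S.card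

/-- `Q i j` is the number of collisions between the nonzero entries of columns `i` and `j`. -/
noncomputable def EtaSSCJL.Q {Ω : Type} [MeasureSpace Ω] {n m s : ℕ} (c : EtaSSCJL Ω n m s)
    (i j : Fin n) (ω : Ω) : ℝ :=
  ∑ r, c.η r i ω * c.η r j ω

open scoped Nat

lemma pow_div_factorial_le_exp_one_mul_div_pow {x : ℝ} (hx : 0 ≤ x) (n : ℕ) :
    x ^ n / n ! ≤ (exp 1 * x / n) ^ n := by
  rcases n.eq_zero_or_pos with rfl | hn
  · simp
  have hfact : ((n : ℝ) / exp 1) ^ n ≤ n ! := by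
    have h := Real.pow_div_factorial_le_exp (n : ℝ) n.cast_nonneg n
    rw [div_le_iff₀ (by positivity)] at h
    rw [div_pow, Real.exp_one_pow, div_le_iff₀ (by positivity)]
    linarith
  calc x ^ n / n ! ≤ x ^ n / ((n : ℝ) / exp 1) ^ n := by gcongr
    _ = (exp 1 * x / n) ^ n := by rw [← div_pow]; congr 1; field_simp

lemma mul_log_div_le {a b : ℝ} (ha : 0 < a) (hb : 0 < b) : b * log (a / b) ≤ a - b := by
  have h := mul_le_mul_of_nonneg_left (log_le_sub_one_of_pos (div_pos ha hb)) hb.le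
  rwa [mul_sub, mul_div_cancel₀ _ hb.ne', mul_one] at h

/-- The rate `ρ(B)` in `‖Y‖_p ≤ e⁶ p ρ(B)`, where `B = m / s²`. -/
noncomputable def collisionRate (B : ℝ) : ℝ :=
  if exp 1 ≤ B then (log B)⁻¹ else B⁻¹

lemma one_le_log_of_exp_one_le {B : ℝ} (hB : exp 1 ≤ B) : 1 ≤ log B := by
  rw [← log_exp 1]; exact log_le_log (exp_pos 1) hB

lemma collisionRate_pos {B : ℝ} (hB : 0 < B) : 0 < collisionRate B := by
  unfold collisionRate
  split_ifs with h
  · have := one_le_log_of_exp_one_le h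
    positivity
  · positivity

lemma pow_sub_mul_pow_le_collisionRate {p k : ℕ} (hk : 1 ≤ k) (hkp : k ≤ p) {B : ℝ}
    (hB : 0 < B) :
    (k : ℝ) ^ (p - k) * (exp 2 * p / B) ^ k ≤ (exp 3 * p * collisionRate B) ^ p := by
  have hk0 : (0 : ℝ) < k := by exact_mod_cast hk
  have hkp' : (k : ℝ) ≤ p := by exact_mod_cast hkp
  have hp0 : (0 : ℝ) < p := by linarith
  -- after taking logarithms, both cases follow from `log y ≤ y - 1` at `y = p / k` and,
  -- when `B ≥ e`, at `y = k log B / p`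
  have hpk := mul_log_div_le hp0 hk0
  rw [← log_le_log_iff (by positivity) (pow_pos (by have := collisionRate_pos hB; positivity) p),
    log_mul (by positivity) (by positivity), log_pow, log_pow, log_pow, Nat.cast_sub hkp,
    log_div (by positivity) hB.ne', log_mul (by positivity) hp0.ne', log_exp,
    log_mul (by positivity) (collisionRate_pos hB).ne', log_mul (by positivity) hp0.ne', log_exp]
  rw [log_div hp0.ne' hk0.ne'] at hpk
  unfold collisionRate
  split_ifs with h
  · have hβ := one_le_log_of_exp_one_le h
    have hβk := mul_log_div_le (mul_pos hk0 (by linarith : 0 < log B)) hp0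
    rw [log_div (by positivity) hp0.ne', log_mul hk0.ne' (by positivity)] at hβk
    rw [log_inv]
    nlinarith
  · have hlogB : log B < 1 := by rw [← log_exp 1]; exact log_lt_log hB (not_le.mp h)
    rw [log_inv]
    nlinarith [log_le_log hk0 hkp']

lemma choose_mul_choose_mul_pow_le {m s j l k p : ℕ} (hm : 0 < m) (hl : 1 ≤ l) (hlk : l ≤ k)
    (hls : l ≤ s) (hkp : k ≤ p) (hj : j ≤ p) :
    (m.choose l : ℝ) * (l * j).choose k * (k ^ p * ((s : ℝ) / m) ^ (l + k))
      ≤ (k : ℝ) ^ (p - k) * (exp 2 * p / (m / s ^ 2)) ^ k := by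
  have hm0 : (0 : ℝ) < m := by exact_mod_cast hm
  have hl0 : (0 : ℝ) < l := by exact_mod_cast hl
  have hk0 : (0 : ℝ) < k := by exact_mod_cast hl.trans hlk
  have hls' : (l : ℝ) ≤ s := by exact_mod_cast hls
  have he : (1 : ℝ) ≤ exp 1 := one_le_exp zero_le_one
  have hrow : (m.choose l : ℝ) * ((s : ℝ) / m) ^ l ≤ (exp 1 * s / l) ^ l :=
    calc (m.choose l : ℝ) * ((s : ℝ) / m) ^ l ≤ (m : ℝ) ^ l / l ! * ((s : ℝ) / m) ^ l := by
          gcongr; exact Nat.choose_le_pow_div l m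
      _ = (s : ℝ) ^ l / l ! := by rw [div_pow]; field_simp
      _ ≤ (exp 1 * s / l) ^ l := pow_div_factorial_le_exp_one_mul_div_pow (by positivity) l
  have hcol : ((l * j).choose k : ℝ) ≤ (exp 1 * (l * p) / k) ^ k :=
    calc ((l * j).choose k : ℝ) ≤ ((l * j : ℕ) : ℝ) ^ k / k ! := Nat.choose_le_pow_div k _
      _ ≤ ((l : ℝ) * p) ^ k / k ! := by push_cast; gcongr
      _ ≤ (exp 1 * (l * p) / k) ^ k := pow_div_factorial_le_exp_one_mul_div_pow (by positivity) k
  have hlpow : (l : ℝ) ^ (k - l) ≤ (exp 1 * s) ^ (k - l) :=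
    pow_le_pow_left₀ hl0.le (hls'.trans (le_mul_of_one_le_left (by positivity) he)) _
  have hsplit_l : (l : ℝ) ^ k = l ^ l * l ^ (k - l) := by rw [← pow_add, Nat.add_sub_cancel' hlk]
  have hsplit_k : (k : ℝ) ^ p = k ^ (p - k) * k ^ k := by rw [← pow_add, Nat.sub_add_cancel hkp]
  have hsplit_s : (exp 1 * s) ^ k = (exp 1 * s) ^ l * (exp 1 * s) ^ (k - l) := by
    rw [← pow_add, Nat.add_sub_cancel' hlk]
  have hexp2 : exp 2 = exp 1 * exp 1 := by rw [← exp_add]; norm_num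
  calc (m.choose l : ℝ) * (l * j).choose k * (k ^ p * ((s : ℝ) / m) ^ (l + k))
      = ((m.choose l : ℝ) * ((s : ℝ) / m) ^ l) * (l * j).choose k
          * (k ^ p * ((s : ℝ) / m) ^ k) := by
        ring
    _ ≤ (exp 1 * s / l) ^ l * (exp 1 * (l * p) / k) ^ k * (k ^ p * ((s : ℝ) / m) ^ k) := by
        gcongr
    _ = (exp 1 * s) ^ l * l ^ (k - l) * ((k : ℝ) ^ (p - k) * (exp 1 * p * s / m) ^ k) := by
        rw [div_pow, div_pow, mul_pow _ ((l : ℝ) * p), mul_pow (l : ℝ), hsplit_l, hsplit_k]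
        field_simp
        ring
    _ ≤ (exp 1 * s) ^ l * (exp 1 * s) ^ (k - l)
          * ((k : ℝ) ^ (p - k) * (exp 1 * p * s / m) ^ k) := by
        gcongr
    _ = (k : ℝ) ^ (p - k) * (exp 2 * p / (m / s ^ 2)) ^ k := by
        rw [← hsplit_s, hexp2]
        field_simp
        ring

lemma Finset.prod_comp_of_isIdempotentElem {α β M : Type*} [CommMonoid M] [DecidableEq β]
    (s : Finset α) (f : α → β) {v : β → M} (hv : ∀ b, IsIdempotentElem (v b)) :
    ∏ a ∈ s, v (f a) = ∏ b ∈ s.image f, v b := by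
  refine (Finset.prod_image' _ fun a ha => ?_).symm
  rw [Finset.prod_congr rfl fun x hx => congrArg v (Finset.mem_filter.mp hx).2, Finset.prod_const]
  obtain ⟨n, hn⟩ := Nat.exists_eq_succ_of_ne_zero
    (Finset.card_ne_zero_of_mem (Finset.mem_filter.mpr ⟨ha, rfl⟩ : a ∈ s.filter (f · = f a)))
  rw [hn, (hv (f a)).pow_succ_eq]

lemma Finset.sum_piFinset_image_le {α : Type*} [DecidableEq α] (A : Finset α) (p : ℕ)
    {w : Finset α → ℝ} (hw : ∀ b, 0 ≤ w b) :
    ∑ f ∈ Fintype.piFinset (fun _ : Fin p => A), w (univ.image f)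
      ≤ ∑ b ∈ A.powerset with b.card ≤ p, (b.card : ℝ) ^ p * w b := by
  have hmaps : ∀ f ∈ Fintype.piFinset (fun _ : Fin p => A),
      univ.image f ∈ A.powerset.filter (·.card ≤ p) := by
    intro f hf
    simp only [Finset.mem_filter, Finset.mem_powerset, Finset.image_subset_iff]
    exact ⟨fun k _ => Fintype.mem_piFinset.mp hf k,
      Finset.card_image_le.trans (by simp)⟩
  rw [← Finset.sum_fiberwise_of_maps_to' hmaps]
  refine Finset.sum_le_sum fun b _ => ?_
  rw [Finset.sum_const, nsmul_eq_mul]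
  gcongr
  · exact hw b
  have hfiber : ((Fintype.piFinset fun _ : Fin p => A).filter (univ.image · = b)).card
      ≤ b.card ^ p :=
    calc _ ≤ (Fintype.piFinset fun _ : Fin p => b).card := by
          refine Finset.card_le_card fun f hf => Fintype.mem_piFinset.mpr fun k => ?_
          rw [← (Finset.mem_filter.mp hf).2]
          exact Finset.mem_image_of_mem f (Finset.mem_univ k)
      _ = b.card ^ p := by simp
  exact_mod_cast hfiber

lemma Finset.sum_powerset_univ_product_le {α β : Type*} [Fintype α] [DecidableEq α]
    [DecidableEq β] (J : Finset β) {F : ℕ → ℕ → ℝ} (hF : ∀ l k, 0 ≤ F l k) :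
    ∑ b ∈ ((univ : Finset α) ×ˢ J).powerset, F (b.image Prod.fst).card b.card
      ≤ ∑ l ∈ range (Fintype.card α + 1), ∑ k ∈ range (l * J.card + 1),
          (Fintype.card α).choose l * (l * J.card).choose k * F l k := by
  set A := (univ : Finset α) ×ˢ J
  have hfiber : ∀ L : Finset α,
      ∑ b ∈ A.powerset with b.image Prod.fst = L, F (b.image Prod.fst).card b.card
        ≤ ∑ b ∈ (L ×ˢ J).powerset, F L.card b.card := by
    intro L
    rw [Finset.sum_congr rfl fun b hb => by rw [(Finset.mem_filter.mp hb).2]]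
    refine Finset.sum_le_sum_of_subset_of_nonneg (fun b hb => ?_) fun _ _ _ => hF _ _
    obtain ⟨hbA, rfl⟩ := Finset.mem_filter.mp hb
    refine Finset.mem_powerset.mpr fun a ha =>
      Finset.mem_product.mpr ⟨Finset.mem_image_of_mem _ ha, ?_⟩
    exact (Finset.mem_product.mp (Finset.mem_powerset.mp hbA ha)).2
  calc _ = ∑ L ∈ (univ : Finset α).powerset,
        ∑ b ∈ A.powerset with b.image Prod.fst = L, F (b.image Prod.fst).card b.card :=
        (Finset.sum_fiberwise_of_maps_to
          (fun b _ => Finset.mem_powerset.mpr (Finset.subset_univ _)) _).symm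
    _ ≤ ∑ L ∈ (univ : Finset α).powerset, ∑ b ∈ (L ×ˢ J).powerset, F L.card b.card :=
        Finset.sum_le_sum fun L _ => hfiber L
    _ = _ := by
        simp_rw [Finset.sum_powerset_apply_card, Finset.card_product]
        rw [Finset.sum_powerset_apply_card (fun l => ∑ k ∈ range (l * J.card + 1),
          (l * J.card).choose k • F l k), Finset.card_univ]
        simp_rw [nsmul_eq_mul, Finset.mul_sum, mul_assoc]

lemma Finset.sum_ite_mem_le_card_mul {α : Type*} [DecidableEq α] (s t : Finset α) {X : ℝ}
    (hX : 0 ≤ X) : ∑ j ∈ s, (if j ∈ t then X else 0 : ℝ) ≤ t.card * X := by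
  rw [Finset.sum_ite_mem s t, Finset.sum_const, nsmul_eq_mul]
  gcongr
  exact Finset.inter_subset_right

/-- Bound for `E ∏ₖ collision i (f k)` when the entries of the tuple `f` form the set `b`: each
row of `b` must also be hit in column `i`, and column `i` hits only `s` rows. -/
noncomputable def collisionWeight (s m : ℕ) {n : ℕ} (b : Finset (Fin m × Fin n)) : ℝ :=
  if (b.image Prod.fst).card ≤ s then ((s : ℝ) / m) ^ ((b.image Prod.fst).card + b.card) else 0

lemma collisionWeight_nonneg (s m : ℕ) {n : ℕ} (b : Finset (Fin m × Fin n)) :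
    0 ≤ collisionWeight s m b := by
  unfold collisionWeight; split_ifs <;> positivity

/-- The contribution to the `p`-th moment of one set of `k` entries spread over `l` rows. -/
noncomputable def collisionTerm (s m p l k : ℕ) : ℝ :=
  if 1 ≤ l ∧ l ≤ s ∧ l ≤ k ∧ k ≤ p then (k : ℝ) ^ p * ((s : ℝ) / m) ^ (l + k) else 0

lemma collisionTerm_nonneg (s m p l k : ℕ) : 0 ≤ collisionTerm s m p l k := by
  unfold collisionTerm; split_ifs <;> positivity

lemma pow_card_mul_collisionWeight_le {s m n p : ℕ} (hp : p ≠ 0) {b : Finset (Fin m × Fin n)}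
    (hbp : b.card ≤ p) :
    (b.card : ℝ) ^ p * collisionWeight s m b
      ≤ collisionTerm s m p (b.image Prod.fst).card b.card := by
  rcases b.eq_empty_or_nonempty with rfl | hb
  · simpa [zero_pow hp] using collisionTerm_nonneg s m p 0 0
  have hrows : 1 ≤ (b.image Prod.fst).card := (hb.image _).card_pos
  unfold collisionWeight collisionTerm
  split_ifs with hs hterm hterm
  · rfl
  · exact absurd ⟨hrows, hs, Finset.card_image_le, hbp⟩ hterm
  · rw [mul_zero]; positivity
  · rw [mul_zero]

lemma choose_mul_choose_mul_collisionTerm_le {s m p j : ℕ} (hs : 0 < s) (hsm : s ≤ m)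
    (hj : j ≤ p) (l k : ℕ) :
    (m.choose l : ℝ) * (l * j).choose k * collisionTerm s m p l k
      ≤ if k ∈ Icc 1 p then (if l ∈ Icc 1 p then (exp 3 * p * collisionRate (m / s ^ 2)) ^ p
          else 0) else 0 := by
  have hB : (0 : ℝ) < m / s ^ 2 := by have : 0 < m := hs.trans_le hsm; positivity
  unfold collisionTerm
  simp only [Finset.mem_Icc]
  split_ifs with hlk hk hl
  · exact (choose_mul_choose_mul_pow_le (hs.trans_le hsm) hlk.1 hlk.2.2.1 hlk.2.1 hlk.2.2.2
      hj).trans (pow_sub_mul_pow_le_collisionRate (hlk.1.trans hlk.2.2.1) hlk.2.2.2 hB)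
  · exact absurd ⟨hlk.1, hlk.2.2.1.trans hlk.2.2.2⟩ hl
  · exact absurd ⟨hlk.1.trans hlk.2.2.1, hlk.2.2.2⟩ hk
  all_goals simp only [mul_zero, le_refl]
  exact pow_nonneg (by have := collisionRate_pos hB; positivity) p

lemma sum_powerset_collisionWeight_le {n m s p : ℕ} (hs : 0 < s) (hsm : s ≤ m) (hp : p ≠ 0)
    (J : Finset (Fin n)) (hJ : J.card ≤ p) :
    ∑ b ∈ ((univ : Finset (Fin m)) ×ˢ J).powerset with b.card ≤ p,
        (b.card : ℝ) ^ p * collisionWeight s m b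
      ≤ p * (p * (exp 3 * p * collisionRate (m / s ^ 2)) ^ p) := by
  set X := (exp 3 * p * collisionRate (m / s ^ 2)) ^ p
  have hX : 0 ≤ X := pow_nonneg (by
    have := collisionRate_pos (by have : 0 < m := hs.trans_le hsm; positivity : (0 : ℝ) < m / s ^ 2)
    positivity) p
  have hIcc : ((Icc 1 p).card : ℝ) = p := by simp
  calc ∑ b ∈ ((univ : Finset (Fin m)) ×ˢ J).powerset with b.card ≤ p,
        (b.card : ℝ) ^ p * collisionWeight s m b
      ≤ ∑ b ∈ ((univ : Finset (Fin m)) ×ˢ J).powerset,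
          collisionTerm s m p (b.image Prod.fst).card b.card := by
        rw [Finset.sum_filter]
        refine Finset.sum_le_sum fun b _ => ?_
        split_ifs with hbp
        · exact pow_card_mul_collisionWeight_le hp hbp
        · exact collisionTerm_nonneg ..
    _ ≤ ∑ l ∈ range (m + 1), ∑ k ∈ range (l * J.card + 1),
          (m.choose l : ℝ) * (l * J.card).choose k * collisionTerm s m p l k := by
        simpa using Finset.sum_powerset_univ_product_le (α := Fin m) J (collisionTerm_nonneg s m p)
    _ ≤ ∑ l ∈ range (m + 1), p * (if l ∈ Icc 1 p then X else 0) := by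
        refine Finset.sum_le_sum fun l _ => ?_
        refine (Finset.sum_le_sum fun k _ =>
          choose_mul_choose_mul_collisionTerm_le hs hsm hJ l k).trans ?_
        exact (Finset.sum_ite_mem_le_card_mul _ _ (by positivity)).trans_eq (by rw [hIcc])
    _ ≤ p * (p * X) := by
        rw [← Finset.mul_sum]
        gcongr
        exact (Finset.sum_ite_mem_le_card_mul _ _ hX).trans_eq (by rw [hIcc])

namespace EtaSSCJL

variable {Ω : Type} [MeasureSpace Ω] {n m s : ℕ} (c : EtaSSCJL Ω n m s)

lemma eta_nonneg (r : Fin m) (i : Fin n) (ω : Ω) : 0 ≤ c.η r i ω := by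
  rcases c.eta01 r i ω with h | h <;> simp [h]

lemma eta_le_one (r : Fin m) (i : Fin n) (ω : Ω) : c.η r i ω ≤ 1 := by
  rcases c.eta01 r i ω with h | h <;> simp [h]

lemma Q_nonneg (i j : Fin n) (ω : Ω) : 0 ≤ c.Q i j ω :=
  Finset.sum_nonneg fun r _ => mul_nonneg (c.eta_nonneg r i ω) (c.eta_nonneg r j ω)

lemma Q_comm (i j : Fin n) (ω : Ω) : c.Q i j ω = c.Q j i ω :=
  Finset.sum_congr rfl fun _ _ => mul_comm _ _

lemma isIdempotentElem_eta (r : Fin m) (i : Fin n) (ω : Ω) : IsIdempotentElem (c.η r i ω) := by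
  rcases c.eta01 r i ω with h | h <;> simp [h, IsIdempotentElem]

lemma integral_prod_eta_le [IsProbabilityMeasure (ℙ : Measure Ω)] (S : Finset (Fin m × Fin n)) :
    ∫ ω, ∏ a ∈ S, c.η a.1 a.2 ω ≤ ((s : ℝ) / m) ^ S.card := by
  set T : Fin n → Finset (Fin m) := fun j => univ.filter fun r => (r, j) ∈ S
  have hcols : ∀ g : Fin m → Fin n → ℝ, ∏ a ∈ S, g a.1 a.2 = ∏ j, ∏ r ∈ T j, g r j :=
    fun g => Finset.prod_finset_product_right' S univ T (by simp [T])
  have hmeas : ∀ j, Measurable fun ω => ∏ r ∈ T j, c.η r j ω :=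
    fun j => Finset.measurable_prod _ fun r _ => c.meas_eta r j
  have hind : iIndepFun (fun j ω => ∏ r ∈ T j, c.η r j ω) ℙ :=
    c.cols_indep.comp (fun j v => ∏ r ∈ T j, v r)
      fun j => Finset.measurable_prod _ fun r _ => measurable_pi_apply r
  calc ∫ ω, ∏ a ∈ S, c.η a.1 a.2 ω = ∫ ω, ∏ j, ∏ r ∈ T j, c.η r j ω := by
        congr 1 with ω; exact hcols fun r j => c.η r j ω
    _ = ∏ j, ∫ ω, ∏ r ∈ T j, c.η r j ω :=
        hind.integral_fun_prod_eq_prod_integral fun j => (hmeas j).aestronglyMeasurable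
    _ ≤ ∏ j, ((s : ℝ) / m) ^ (T j).card :=
        Finset.prod_le_prod (fun j _ => integral_nonneg fun ω =>
          Finset.prod_nonneg fun r _ => c.eta_nonneg r j ω) fun j _ => c.neg_corr (T j) j
    _ = ((s : ℝ) / m) ^ S.card := by
        rw [← Finset.prod_const (s := S), hcols fun _ _ => (s : ℝ) / m]
        simp only [Finset.prod_const]

lemma prod_eta_eq_zero_ae {L : Finset (Fin m)} (hL : s < L.card) (i : Fin n) :
    ∀ᵐ ω, ∏ r ∈ L, c.η r i ω = 0 := by
  filter_upwards [c.col_sum i] with ω hω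
  by_contra hne
  have hone : ∀ r ∈ L, c.η r i ω = 1 := fun r hr =>
    (c.eta01 r i ω).resolve_left (Finset.prod_ne_zero_iff.mp hne r hr)
  have hL' : (L.card : ℝ) ≤ s :=
    calc (L.card : ℝ) = ∑ r ∈ L, c.η r i ω := by simp [Finset.sum_congr rfl hone]
      _ ≤ ∑ r, c.η r i ω := Finset.sum_le_univ_sum_of_nonneg fun r => c.eta_nonneg r i ω
      _ = s := hω
  exact absurd hL' (by exact_mod_cast hL.not_ge)

def collision (i : Fin n) (a : Fin m × Fin n) (ω : Ω) : ℝ :=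
  c.η a.1 i ω * c.η a.1 a.2 ω

lemma collision_nonneg (i : Fin n) (a : Fin m × Fin n) (ω : Ω) : 0 ≤ c.collision i a ω :=
  mul_nonneg (c.eta_nonneg _ _ ω) (c.eta_nonneg _ _ ω)

lemma collision_le_one (i : Fin n) (a : Fin m × Fin n) (ω : Ω) : c.collision i a ω ≤ 1 :=
  mul_le_one₀ (c.eta_le_one _ _ ω) (c.eta_nonneg _ _ ω) (c.eta_le_one _ _ ω)

lemma integral_prod_collision_le [IsProbabilityMeasure (ℙ : Measure Ω)] {p : ℕ} (i : Fin n)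
    (f : Fin p → Fin m × Fin n) (hf : ∀ k, (f k).2 ≠ i) :
    ∫ ω, ∏ k, c.collision i (f k) ω ≤ collisionWeight s m (univ.image f) := by
  set rows := (univ.image f).image Prod.fst
  -- the `η` are idempotent, so repeated factors collapse to the sets of entries involved
  have hsplit : ∀ ω, ∏ k, c.collision i (f k) ω
      = (∏ r ∈ rows, c.η r i ω) * ∏ a ∈ univ.image f, c.η a.1 a.2 ω := by
    intro ω
    rw [show rows = univ.image (Prod.fst ∘ f) from Finset.image_image,
      ← Finset.prod_comp_of_isIdempotentElem _ _ fun r => c.isIdempotentElem_eta r i ω,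
      ← Finset.prod_comp_of_isIdempotentElem _ f (v := fun a : Fin m × Fin n => c.η a.1 a.2 ω)
        fun a => c.isIdempotentElem_eta a.1 a.2 ω, ← Finset.prod_mul_distrib]
    rfl
  unfold collisionWeight
  split_ifs with hrows
  · have hdisj : Disjoint (rows ×ˢ {i}) (univ.image f) := by
      rw [Finset.disjoint_left]
      intro a ha hfa
      obtain ⟨k, -, rfl⟩ := Finset.mem_image.mp hfa
      exact hf k (Finset.mem_singleton.mp (Finset.mem_product.mp ha).2)
    calc ∫ ω, ∏ k, c.collision i (f k) ω
        = ∫ ω, ∏ a ∈ rows ×ˢ {i} ∪ univ.image f, c.η a.1 a.2 ω := by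
          congr 1 with ω
          rw [hsplit, Finset.prod_union hdisj, Finset.prod_product]
          simp
      _ ≤ _ := c.integral_prod_eta_le _
      _ = _ := by rw [Finset.card_union_of_disjoint hdisj, Finset.card_product,
          Finset.card_singleton, mul_one]
  · rw [integral_congr_ae (g := fun _ => 0) ?_, integral_zero]
    filter_upwards [c.prod_eta_eq_zero_ae (not_le.mp hrows) i] with ω hω
    rw [hsplit, hω, zero_mul]

lemma integrable_prod_collision [IsProbabilityMeasure (ℙ : Measure Ω)] {p : ℕ} (i : Fin n)
    (f : Fin p → Fin m × Fin n) : Integrable fun ω => ∏ k, c.collision i (f k) ω := by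
  refine Integrable.of_bound (Finset.measurable_prod _ fun k _ =>
    (c.meas_eta _ _).mul (c.meas_eta _ _)).aestronglyMeasurable 1 (ae_of_all _ fun ω => ?_)
  rw [Real.norm_eq_abs, abs_of_nonneg (Finset.prod_nonneg fun k _ => c.collision_nonneg i _ ω)]
  exact Finset.prod_le_one (fun k _ => c.collision_nonneg i _ ω)
    fun k _ => c.collision_le_one i _ ω

lemma sum_Q_pow_eq (i : Fin n) (J : Finset (Fin n)) (p : ℕ) (ω : Ω) :
    (∑ j ∈ J, c.Q i j ω) ^ p = ∑ f ∈ Fintype.piFinset fun _ : Fin p => (univ : Finset (Fin m)) ×ˢ J,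
      ∏ k, c.collision i (f k) ω := by
  rw [← Finset.prod_univ_sum (fun _ => _) fun _ a => c.collision i a ω, Fin.prod_const,
    Finset.sum_product_right]
  rfl

lemma integrable_sum_Q_pow [IsProbabilityMeasure (ℙ : Measure Ω)] (i : Fin n)
    (J : Finset (Fin n)) (p : ℕ) : Integrable fun ω => (∑ j ∈ J, c.Q i j ω) ^ p := by
  simp_rw [c.sum_Q_pow_eq]
  exact integrable_finsetSum _ fun f _ => c.integrable_prod_collision i f

lemma integral_sum_Q_pow_le [IsProbabilityMeasure (ℙ : Measure Ω)] (hs : 0 < s) (hsm : s ≤ m)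
    {p : ℕ} (hp : p ≠ 0) (i : Fin n) {J : Finset (Fin n)} (hiJ : i ∉ J) (hJ : J.card ≤ p) :
    ∫ ω, (∑ j ∈ J, c.Q i j ω) ^ p ≤ p * (p * (exp 3 * p * collisionRate (m / s ^ 2)) ^ p) := by
  calc ∫ ω, (∑ j ∈ J, c.Q i j ω) ^ p
      = ∑ f ∈ Fintype.piFinset fun _ : Fin p => (univ : Finset (Fin m)) ×ˢ J,
          ∫ ω, ∏ k, c.collision i (f k) ω := by
        simp_rw [c.sum_Q_pow_eq]
        exact integral_finsetSum _ fun f _ => c.integrable_prod_collision i f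
    _ ≤ ∑ f ∈ Fintype.piFinset fun _ : Fin p => (univ : Finset (Fin m)) ×ˢ J,
          collisionWeight s m (univ.image f) := by
        refine Finset.sum_le_sum fun f hf => c.integral_prod_collision_le i f fun k hk => hiJ ?_
        rw [← hk]
        exact (Finset.mem_product.mp (Fintype.mem_piFinset.mp hf k)).2
    _ ≤ ∑ b ∈ ((univ : Finset (Fin m)) ×ˢ J).powerset with b.card ≤ p,
          (b.card : ℝ) ^ p * collisionWeight s m b :=
        Finset.sum_piFinset_image_le _ p (collisionWeight_nonneg s m)
    _ ≤ _ := sum_powerset_collisionWeight_le hs hsm hp J hJ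

end EtaSSCJL

lemma Finset.sum_sum_abs_mul_le_sum_sq_mul {ι : Type*} [DecidableEq ι] (P : Finset ι)
    {Q : ι → ι → ℝ} (hQ : ∀ i j, 0 ≤ Q i j) (hQc : ∀ i j, Q i j = Q j i) (x : ι → ℝ) :
    ∑ i ∈ P, ∑ j ∈ P with j ≠ i, |Q i j * x i * x j|
      ≤ ∑ i ∈ P, x i ^ 2 * ∑ j ∈ P with j ≠ i, Q i j := by
  have hswap : ∑ i ∈ P, ∑ j ∈ P with j ≠ i, Q i j * x j ^ 2
      = ∑ i ∈ P, ∑ j ∈ P with j ≠ i, Q i j * x i ^ 2 := by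
    rw [Finset.sum_comm' (t' := P) (s' := fun j => P.filter (· ≠ j)) (by simp; tauto)]
    simp_rw [hQc]
  calc ∑ i ∈ P, ∑ j ∈ P with j ≠ i, |Q i j * x i * x j|
      ≤ ∑ i ∈ P, ∑ j ∈ P with j ≠ i, (Q i j * x i ^ 2 / 2 + Q i j * x j ^ 2 / 2) := by
        gcongr with i _ j _
        rw [abs_mul, abs_mul, abs_of_nonneg (hQ i j), mul_assoc]
        nlinarith [hQ i j, mul_nonneg (hQ i j) (sq_nonneg (|x i| - |x j|)), sq_abs (x i),
          sq_abs (x j)]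
    _ = ∑ i ∈ P, ∑ j ∈ P with j ≠ i, Q i j * x i ^ 2 := by
        simp_rw [Finset.sum_add_distrib, ← Finset.sum_div, hswap]
        ring
    _ = ∑ i ∈ P, x i ^ 2 * ∑ j ∈ P with j ≠ i, Q i j := by
        simp_rw [Finset.mul_sum, mul_comm]

lemma Finset.pow_sum_mul_le_sum_pow {ι : Type*} (s : Finset ι) {w R : ι → ℝ}
    (hw : ∀ i ∈ s, 0 ≤ w i) (hw1 : ∑ i ∈ s, w i ≤ 1) (hR : ∀ i ∈ s, 0 ≤ R i) {p : ℕ}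
    (hp : p ≠ 0) : (∑ i ∈ s, w i * R i) ^ p ≤ ∑ i ∈ s, R i ^ p := by
  rcases s.eq_empty_or_nonempty with rfl | hs
  · simp [hp]
  obtain ⟨i₀, hi₀, hmax⟩ := s.exists_max_image R hs
  have hle : ∑ i ∈ s, w i * R i ≤ R i₀ :=
    calc ∑ i ∈ s, w i * R i ≤ ∑ i ∈ s, w i * R i₀ :=
          Finset.sum_le_sum fun i hi => mul_le_mul_of_nonneg_left (hmax i hi) (hw i hi)
      _ = (∑ i ∈ s, w i) * R i₀ := (Finset.sum_mul ..).symm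
      _ ≤ R i₀ := mul_le_of_le_one_left (hR i₀ hi₀) hw1
  calc (∑ i ∈ s, w i * R i) ^ p ≤ R i₀ ^ p :=
        pow_le_pow_left₀ (Finset.sum_nonneg fun i hi => mul_nonneg (hw i hi) (hR i hi)) hle p
    _ ≤ ∑ i ∈ s, R i ^ p :=
        Finset.single_le_sum (fun i hi => pow_nonneg (hR i hi) p) hi₀

lemma pnorm_le_of_integral_pow_le {Ω : Type*} [MeasureSpace Ω] {Y : Ω → ℝ}
    (hY : ∀ ω, 0 ≤ Y ω) {p : ℕ} (hp : p ≠ 0) {C : ℝ} (hC : 0 ≤ C)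
    (h : ∫ ω, Y ω ^ p ≤ C ^ p) : pnorm Y p ≤ C := by
  unfold pnorm
  simp_rw [abs_of_nonneg (hY _), rpow_natCast, one_div]
  calc (∫ ω, Y ω ^ p) ^ (p⁻¹ : ℝ) ≤ (C ^ p) ^ (p⁻¹ : ℝ) :=
        rpow_le_rpow (integral_nonneg fun ω => pow_nonneg (hY ω) p) h (by positivity)
    _ = C := pow_rpow_inv_natCast hC hp

lemma pow_three_le_exp_three_pow (p : ℕ) : (p : ℝ) ^ 3 ≤ exp 3 ^ p := by
  calc (p : ℝ) ^ 3 ≤ exp p ^ 3 := by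
        gcongr; linarith [add_one_le_exp (p : ℝ)]
    _ = exp 3 ^ p := by rw [← exp_nat_mul, ← exp_nat_mul]; ring_nf

theorem EtaSSCJL.pnorm_sum_offDiag_le {Ω : Type} [MeasureSpace Ω]
    [IsProbabilityMeasure (ℙ : Measure Ω)] {n m s : ℕ} (c : EtaSSCJL Ω n m s) (hs : 0 < s)
    (hsm : s ≤ m) (x : Fin n → ℝ) (P : Finset (Fin n)) (hx : ∑ i ∈ P, x i ^ 2 ≤ 1) {p : ℕ}
    (hp : p ≠ 0) (hP : P.card ≤ p) :
    pnorm (fun ω => ∑ i ∈ P, ∑ j ∈ P with j ≠ i, |c.Q i j ω * x i * x j|) p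
      ≤ exp 6 * p * collisionRate (m / s ^ 2) := by
  set R : Fin n → Ω → ℝ := fun i ω => ∑ j ∈ P with j ≠ i, c.Q i j ω
  set X := (exp 3 * p * collisionRate (m / s ^ 2)) ^ p
  have hB : (0 : ℝ) < m / s ^ 2 := by have : 0 < m := hs.trans_le hsm; positivity
  have hR : ∀ i ω, 0 ≤ R i ω := fun i ω => Finset.sum_nonneg fun j _ => c.Q_nonneg i j ω
  have hpoint : ∀ ω, (∑ i ∈ P, ∑ j ∈ P with j ≠ i, |c.Q i j ω * x i * x j|) ^ p
      ≤ ∑ i ∈ P, R i ω ^ p := fun ω =>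
    (pow_le_pow_left₀ (by positivity) (Finset.sum_sum_abs_mul_le_sum_sq_mul P
      (fun i j => c.Q_nonneg i j ω) (fun i j => c.Q_comm i j ω) x) p).trans
    (Finset.pow_sum_mul_le_sum_pow P (fun i _ => sq_nonneg _) hx (fun i _ => hR i ω)
      hp)
  have hmoment : ∀ i ∈ P, ∫ ω, R i ω ^ p ≤ p * (p * X) := fun i _ =>
    c.integral_sum_Q_pow_le hs hsm hp i (by simp) ((Finset.card_filter_le _ _).trans hP)
  refine pnorm_le_of_integral_pow_le (fun ω => by positivity) hp
    (by have := collisionRate_pos hB; positivity) ?_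
  calc ∫ ω, (∑ i ∈ P, ∑ j ∈ P with j ≠ i, |c.Q i j ω * x i * x j|) ^ p
      ≤ ∫ ω, ∑ i ∈ P, R i ω ^ p :=
        integral_mono_of_nonneg (ae_of_all _ fun ω => by positivity)
          (integrable_finsetSum _ fun i _ => c.integrable_sum_Q_pow i _ p) (ae_of_all _ hpoint)
    _ = ∑ i ∈ P, ∫ ω, R i ω ^ p :=
        integral_finsetSum _ fun i _ => c.integrable_sum_Q_pow i _ p
    _ ≤ p * (p * (p * X)) := by
        refine (Finset.sum_le_sum hmoment).trans ?_
        rw [Finset.sum_const, nsmul_eq_mul]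
        gcongr
        have := collisionRate_pos hB; positivity
    _ ≤ exp 3 ^ p * X := by
        rw [← mul_assoc, ← mul_assoc, show (p : ℝ) * p * p = p ^ 3 by ring]
        gcongr
        · have := collisionRate_pos hB; positivity
        · exact pow_three_le_exp_three_pow p
    _ = (exp 6 * p * collisionRate (m / s ^ 2)) ^ p := by
        rw [← mul_pow, show exp 6 = exp 3 * exp 3 by rw [← exp_add]; norm_num]
        ring_nf

theorem sscjl_diagonal_block_bound :
    ∃ C : ℝ, 0 < C ∧
      ∀ (Ω : Type) [MeasureSpace Ω] [IsProbabilityMeasure (ℙ : Measure Ω)]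
        (n m s : ℕ), 0 < n → 0 < m → 0 < s → s ≤ m →
        ∀ (c : EtaSSCJL Ω n m s) (x : Fin n → ℝ), (∑ i, x i ^ 2 = 1) →
        (∀ i j : Fin n, i ≤ j → |x j| ≤ |x i|) →
        ∀ p : ℕ, 2 ≤ p → p ≤ n →
          (Real.exp 1 ≤ (m : ℝ) / s ^ 2 →
            pnorm (fun ω =>
                ∑ i ∈ Finset.univ.filter (fun i : Fin n => (i : ℕ) < p),
                  ∑ j ∈ Finset.univ.filter (fun j : Fin n => (j : ℕ) < p ∧ j ≠ i),
                    |c.Q i j ω * x i * x j|) p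
              ≤ C * p / Real.log ((m : ℝ) / s ^ 2)) ∧
          ((m : ℝ) / s ^ 2 < Real.exp 1 →
            pnorm (fun ω =>
                ∑ i ∈ Finset.univ.filter (fun i : Fin n => (i : ℕ) < p),
                  ∑ j ∈ Finset.univ.filter (fun j : Fin n => (j : ℕ) < p ∧ j ≠ i),
                    |c.Q i j ω * x i * x j|) p
              ≤ C * p / ((m : ℝ) / s ^ 2)) := by
  refine ⟨exp 6, exp_pos 6, ?_⟩
  intro Ω _ _ n m s _ _ hs hsm c x hx _ p hp _
  have hbound := c.pnorm_sum_offDiag_le hs hsm x (univ.filter fun i : Fin n => (i : ℕ) < p)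
    (hx ▸ Finset.sum_le_univ_sum_of_nonneg fun i => sq_nonneg (x i)) (by omega)
    (Fin.card_filter_val_lt.trans_le (min_le_right n p))
  simp only [Finset.filter_filter] at hbound
  unfold collisionRate at hbound
  constructor
  · intro hB
    rwa [if_pos hB, ← div_eq_mul_inv] at hbound
  · intro hB
    rwa [if_neg (not_le.mpr hB), ← div_eq_mul_inv] at hbound
end

section
/- In the sparse sign-consistent JL construction with per-column uniform supports, let x = (1/√2, 1/√2, 0, …, 0) ∈ ℝⁿ (with n ≥ 2), and for an even integer p ≥ 2 define U_p := ‖ √p·√( ∑_{i=1}^n ∑_{j≤n, j≠i} Q_{i,j}² x_i² x_j² ) + p·sup_{‖y‖₂=1} |∑_{i=1}^n ∑_{j≤n, j≠i} Q_{i,j} x_i x_j y_i y_j| ‖_p. Then there exist universal constants c₁, c₂ > 0 such that c₁·p·‖Q_{1,2}‖_p ≤ U_p ≤ c₂·p·‖Q_{1,2}‖_p. -/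
open MeasureTheory ProbabilityTheory Finset Real

/-- The hash variables `η` of the sparse, sign-consistent JL construction with per-column
uniform supports: independently for each column, the set of rows where the column equals `1`
is a uniformly random `s`-element subset of the `m` rows. -/
structure UnifSSCJL (Ω : Type) [MeasureSpace Ω] (n m s : ℕ) where
  η : Fin m → Fin n → Ω → ℝ
  meas_eta : ∀ r i, Measurable (η r i)
  eta01 : ∀ r i ω, η r i ω = 0 ∨ η r i ω = 1
  cols_indep : iIndepFun (fun i ω => fun r => η r i ω) ℙ
  unif : ∀ (i : Fin n) (S : Finset (Fin m)), S.card = s →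
    ℙ {ω | ∀ r, η r i ω = 1 ↔ r ∈ S} = (Nat.choose m s : ENNReal)⁻¹

/-- `Q i j` is the number of collisions between the nonzero entries of columns `i` and `j`. -/
noncomputable def UnifSSCJL.Q {Ω : Type} [MeasureSpace Ω] {n m s : ℕ} (c : UnifSSCJL Ω n m s)
    (i j : Fin n) (ω : Ω) : ℝ :=
  ∑ r, c.η r i ω * c.η r j ω

/-! The weight vector `x` lives on two coordinates, where it equals `1/√2`, so for a symmetric `Q`
both Hanson–Wright terms are deterministic multiples of `|Q₁₂|`: the Frobenius term is
`√p · |Q₁₂| / √2`, and the operator term is `p · |Q₁₂| / 2` because the supremum of `|y₁ y₂|` over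
the unit sphere is `1/2`. Hence `U_p = (√(p/2) + p/2) ‖Q₁₂‖_p`, and `p/2 ≤ √(p/2) + p/2 ≤ p` for
`p ≥ 2`. -/

section pnorm

variable {Ω : Type*} [MeasureSpace Ω]

lemma pnorm_nonneg (Y : Ω → ℝ) (p : ℝ) : 0 ≤ pnorm Y p :=
  rpow_nonneg (integral_nonneg fun _ => rpow_nonneg (abs_nonneg _) _) _

lemma pnorm_const_mul_abs {a : ℝ} (ha : 0 ≤ a) (Y : Ω → ℝ) {p : ℝ} (hp : p ≠ 0) :
    pnorm (fun ω => a * |Y ω|) p = a * pnorm Y p := by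
  have hpow : ∀ ω, |(a * |Y ω|)| ^ p = a ^ p * |Y ω| ^ p := fun ω => by
    rw [abs_mul, abs_abs, abs_of_nonneg ha, mul_rpow ha (abs_nonneg _)]
  simp only [pnorm, hpow, integral_const_mul]
  rw [mul_rpow (rpow_nonneg ha _) (integral_nonneg fun _ => rpow_nonneg (abs_nonneg _) _),
    ← rpow_mul ha, mul_one_div_cancel hp, rpow_one]

end pnorm

lemma UnifSSCJL.Q_comm {Ω : Type} [MeasureSpace Ω] {n m s : ℕ} (c : UnifSSCJL Ω n m s)
    (i j : Fin n) (ω : Ω) : c.Q i j ω = c.Q j i ω :=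
  sum_congr rfl fun _ _ => mul_comm _ _

lemma one_div_sqrt_two_sq : (1 / √2) ^ 2 = (1 / 2 : ℝ) := by
  rw [div_pow, one_pow, sq_sqrt zero_le_two]

section TwoSpike

variable {ι : Type*} [Fintype ι] {a b : ι}

lemma sum_sum_ne_eq_add_of_support_pair [DecidableEq ι] {M : Type*} [AddCommMonoid M]
    (hab : a ≠ b) (f : ι → ι → M) (hrow : ∀ i j, i ≠ a → i ≠ b → f i j = 0)
    (hcol : ∀ i j, j ≠ a → j ≠ b → f i j = 0) :
    ∑ i, ∑ j ∈ univ.filter (fun j => j ≠ i), f i j = f a b + f b a := by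
  have hinner : ∀ {i k}, k ≠ i → (∀ j, j ≠ i → j ≠ k → f i j = 0) →
      ∑ j ∈ univ.filter (fun j => j ≠ i), f i j = f i k := fun hki hf =>
    sum_eq_single_of_mem _ (by simpa using hki) fun j hj hjk => hf j (by simpa using hj) hjk
  rw [Fintype.sum_eq_add a b hab fun i hi => sum_eq_zero fun j _ => hrow i j hi.1 hi.2,
    hinner hab.symm fun j hja hjb => hcol a j hja hjb,
    hinner hab fun j hjb hja => hcol b j hja hjb]

lemma iSup_unit_sphere_abs_mul_apply_mul_apply [DecidableEq ι] (hab : a ≠ b) (q : ℝ) :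
    (⨆ y : {y : ι → ℝ // ∑ k, y k ^ 2 = 1}, |q * y.1 a * y.1 b|) = |q| / 2 := by
  have hbound : ∀ y : {y : ι → ℝ // ∑ k, y k ^ 2 = 1}, |q * y.1 a * y.1 b| ≤ |q| / 2 := by
    rintro ⟨y, hy⟩
    have hab_sq : y a ^ 2 + y b ^ 2 ≤ 1 := by
      rw [← hy, ← sum_pair (f := fun k => y k ^ 2) hab]
      exact sum_le_univ_sum_of_nonneg fun k => sq_nonneg (y k)
    have hamgm : |y a * y b| ≤ 1 / 2 := by
      rw [abs_mul]
      nlinarith [sq_nonneg (|y a| - |y b|), sq_abs (y a), sq_abs (y b)]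
    rw [mul_assoc, abs_mul]
    nlinarith [abs_nonneg q]
  let z : ι → ℝ := fun k => if k = a ∨ k = b then 1 / √2 else 0
  have hza : z a = 1 / √2 := if_pos (.inl rfl)
  have hzb : z b = 1 / √2 := if_pos (.inr rfl)
  have hz : ∑ k, z k ^ 2 = 1 := by
    rw [Fintype.sum_eq_add a b hab fun k hk => by simp [z, hk.1, hk.2], hza, hzb, one_div_sqrt_two_sq]
    norm_num
  have : Nonempty {y : ι → ℝ // ∑ k, y k ^ 2 = 1} := ⟨⟨z, hz⟩⟩
  refine le_antisymm (ciSup_le hbound)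
    (le_ciSup_of_le ⟨_, Set.forall_mem_range.2 hbound⟩ ⟨z, hz⟩ ?_)
  change |q| / 2 ≤ |q * z a * z b|
  rw [hza, hzb, mul_assoc, ← sq, one_div_sqrt_two_sq, abs_mul,
    abs_of_pos (one_half_pos (α := ℝ)), div_eq_mul_one_div]

lemma hansonWright_terms_of_two_spike [DecidableEq ι] (hab : a ≠ b) {x : ι → ℝ}
    (hx : ∀ k, k ≠ a → k ≠ b → x k = 0) (hxa : x a = 1 / √2) (hxb : x b = 1 / √2)
    {Q : ι → ι → ℝ} (hQ : ∀ i j, Q i j = Q j i) (t : ℝ) :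
    √t * √(∑ i, ∑ j ∈ univ.filter (fun j => j ≠ i), Q i j ^ 2 * x i ^ 2 * x j ^ 2) +
        t * ⨆ y : {y : ι → ℝ // ∑ k, y k ^ 2 = 1},
          |∑ i, ∑ j ∈ univ.filter (fun j => j ≠ i), Q i j * x i * x j * y.1 i * y.1 j| =
      (√(t / 2) + t / 2) * |Q a b| := by
  have hfrob : ∑ i, ∑ j ∈ univ.filter (fun j => j ≠ i), Q i j ^ 2 * x i ^ 2 * x j ^ 2 =
      Q a b ^ 2 / 2 := by
    rw [sum_sum_ne_eq_add_of_support_pair hab _ (fun i j hia hib => by simp [hx i hia hib])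
      (fun i j hja hjb => by simp [hx j hja hjb]), hQ b a, hxa, hxb]
    rw [one_div_sqrt_two_sq]
    ring
  have hbilin : ∀ y : ι → ℝ, ∑ i, ∑ j ∈ univ.filter (fun j => j ≠ i),
      Q i j * x i * x j * y i * y j = Q a b * y a * y b := fun y => by
    rw [sum_sum_ne_eq_add_of_support_pair hab _ (fun i j hia hib => by simp [hx i hia hib])
      (fun i j hja hjb => by simp [hx j hja hjb]), hQ b a, hxa, hxb]
    linear_combination (2 * Q a b * y a * y b) * one_div_sqrt_two_sq
  simp only [hfrob, hbilin, iSup_unit_sphere_abs_mul_apply_mul_apply hab]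
  rw [sqrt_div' _ zero_le_two, sqrt_div' _ zero_le_two, sqrt_sq_eq_abs]
  ring

end TwoSpike

theorem hanson_wright_term_eq_Q12 :
    ∃ c₁ c₂ : ℝ, 0 < c₁ ∧ 0 < c₂ ∧
      ∀ (Ω : Type) [MeasureSpace Ω] [IsProbabilityMeasure (ℙ : Measure Ω)]
        (n m s : ℕ) (hn : 2 ≤ n), 0 < s → s ≤ m →
        ∀ (c : UnifSSCJL Ω n m s) (p : ℕ), Even p → 2 ≤ p →
          c₁ * p * pnorm (c.Q ⟨0, by omega⟩ ⟨1, by omega⟩) p ≤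
            pnorm (fun ω =>
              Real.sqrt p * Real.sqrt (∑ i, ∑ j ∈ Finset.univ.filter (fun j => j ≠ i),
                  (c.Q i j ω) ^ 2 *
                    (if (i : ℕ) < 2 then 1 / Real.sqrt 2 else 0) ^ 2 *
                    (if (j : ℕ) < 2 then 1 / Real.sqrt 2 else 0) ^ 2) +
              p * ⨆ y : {y : Fin n → ℝ // ∑ k, y k ^ 2 = 1},
                  |∑ i, ∑ j ∈ Finset.univ.filter (fun j => j ≠ i),
                    c.Q i j ω *
                      (if (i : ℕ) < 2 then 1 / Real.sqrt 2 else 0) *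
                      (if (j : ℕ) < 2 then 1 / Real.sqrt 2 else 0) *
                      y.1 i * y.1 j|) p ∧
          pnorm (fun ω =>
              Real.sqrt p * Real.sqrt (∑ i, ∑ j ∈ Finset.univ.filter (fun j => j ≠ i),
                  (c.Q i j ω) ^ 2 *
                    (if (i : ℕ) < 2 then 1 / Real.sqrt 2 else 0) ^ 2 *
                    (if (j : ℕ) < 2 then 1 / Real.sqrt 2 else 0) ^ 2) +
              p * ⨆ y : {y : Fin n → ℝ // ∑ k, y k ^ 2 = 1},
                  |∑ i, ∑ j ∈ Finset.univ.filter (fun j => j ≠ i),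
                    c.Q i j ω *
                      (if (i : ℕ) < 2 then 1 / Real.sqrt 2 else 0) *
                      (if (j : ℕ) < 2 then 1 / Real.sqrt 2 else 0) *
                      y.1 i * y.1 j|) p ≤
            c₂ * p * pnorm (c.Q ⟨0, by omega⟩ ⟨1, by omega⟩) p := by
  refine ⟨1 / 2, 1, one_half_pos, one_pos, fun Ω _ _ n _ _ hn _ _ c p _ hp => ?_⟩
  have hab : (⟨0, by omega⟩ : Fin n) ≠ ⟨1, by omega⟩ := by simp
  have hx : ∀ k : Fin n, k ≠ ⟨0, by omega⟩ → k ≠ ⟨1, by omega⟩ →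
      (if (k : ℕ) < 2 then 1 / √2 else 0) = 0 := fun k hk0 hk1 =>
    if_neg fun hk => by simp only [ne_eq, Fin.ext_iff] at hk0 hk1; omega
  rw [funext fun ω => hansonWright_terms_of_two_spike hab hx (if_pos two_pos) (if_pos one_lt_two)
    (c.Q_comm · · ω) p, pnorm_const_mul_abs (by positivity) _ (by positivity)]
  have hp2 : (1 : ℝ) ≤ p / 2 := by rw [le_div_iff₀ two_pos]; exact_mod_cast hp
  have hsqrt : √(p / 2 : ℝ) ≤ p / 2 := sqrt_le_self_iff.2 (.inr hp2)
  have hnorm := pnorm_nonneg (c.Q ⟨0, by omega⟩ ⟨1, by omega⟩) p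
  constructor <;> gcongr <;> linarith [sqrt_nonneg (p / 2 : ℝ)]
end

section
/- Let X be a random variable with the binomial distribution Bin(s, s/m) where s ≤ m are positive integers, let p be an integer with 1 ≤ p < s, set B := m/s², and assume B ≤ e^p/p. Then there exist universal constants c₁, c₂ > 0 such that: if B ≥ e/p then c₁·p/log(Bp) ≤ ‖X‖_p ≤ c₂·p/log(Bp), and if B < e/p then c₁/B ≤ ‖X‖_p ≤ c₂/B. -/
/-!
Write `μ = N α` for the mean of `X ~ Bin(N, α)`; in the theorem `μ = s² / m = 1 / B`,
so `B p = p / μ`.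

Upper bound: `x ^ p ≤ (p / l) ^ p * e ^ (l x)` together with `E e ^ (l X) ≤ exp (μ (e ^ l - 1))`
gives `E X ^ p ≤ (p / l) ^ p * exp (μ (e ^ l - 1))` for every `l > 0`; take `l = log (p / μ)`
when `p / μ ≥ e`, and `l = p / μ` otherwise.

Lower bound: for `p / μ < e` Jensen's `E X ^ p ≥ μ ^ p` suffices. For `p / μ ≥ e` a single atom
does it: with `L = log (p / μ)`, the point `k = ⌈p / (2 L)⌉` has probability at least
`(μ / (2 k)) ^ k * e ^ (-2 μ) ≥ e ^ (-4 p)`, so `E X ^ p ≥ (e ^ (-4) k) ^ p ≥ (e ^ (-5) p / L) ^ p`.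
-/

open MeasureTheory ProbabilityTheory Finset Real

/-- `X` has the binomial distribution `Bin(N, α)` (as a real-valued random variable). -/
def HasBinomialDist {Ω : Type*} [MeasureSpace Ω] (X : Ω → ℝ) (N : ℕ) (α : ℝ) : Prop :=
  ∀ k : ℕ, ℙ {ω | X ω = (k : ℝ)} =
    ENNReal.ofReal ((N.choose k : ℝ) * α ^ k * (1 - α) ^ (N - k))

noncomputable def binomialWeight (N : ℕ) (α : ℝ) (k : ℕ) : ℝ :=
  N.choose k * α ^ k * (1 - α) ^ (N - k)

noncomputable def binomialMoment (N : ℕ) (α : ℝ) (p : ℕ) : ℝ :=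
  ∑ k ∈ range (N + 1), (k : ℝ) ^ p * binomialWeight N α k

lemma pow_le_div_pow_mul_exp {x l : ℝ} (hx : 0 ≤ x) (hl : 0 < l) (p : ℕ) :
    x ^ p ≤ (p / l) ^ p * exp (l * x) := by
  have hfact : (l * x) ^ p ≤ (p : ℝ) ^ p * exp (l * x) := by
    have h := pow_div_factorial_le_exp _ (mul_nonneg hl.le hx) p
    rw [div_le_iff₀ (by positivity)] at h
    calc (l * x) ^ p ≤ exp (l * x) * p.factorial := h
      _ ≤ exp (l * x) * (p : ℝ) ^ p := by gcongr; exact_mod_cast p.factorial_le_pow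
      _ = (p : ℝ) ^ p * exp (l * x) := mul_comm _ _
  rw [div_pow, div_mul_eq_mul_div, le_div_iff₀ (by positivity), ← mul_pow, mul_comm x]
  exact hfact

lemma exp_neg_two_mul_le_one_sub {a : ℝ} (h0 : 0 ≤ a) (h1 : a ≤ 1 / 2) :
    exp (-(2 * a)) ≤ 1 - a := by
  have hpos : 0 < 1 - a := by linarith
  rw [← exp_log hpos, exp_le_exp]
  refine le_trans ?_ (one_sub_inv_le_log_of_pos hpos)
  have : (1 - a)⁻¹ ≤ 1 + 2 * a := by
    rw [inv_le_iff_one_le_mul₀ hpos]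
    nlinarith
  linarith

lemma Nat.div_two_mul_pow_le_choose {n k : ℕ} (h : 2 * k ≤ n + 2) :
    ((n : ℝ) / (2 * k)) ^ k ≤ n.choose k := by
  have hhalf : (n : ℝ) / 2 ≤ (n + 1 - k : ℕ) := by
    have h' : (2 * k : ℝ) ≤ n + 2 := by exact_mod_cast h
    rw [Nat.cast_sub (by omega)]
    push_cast
    linarith
  calc ((n : ℝ) / (2 * k)) ^ k = ((n : ℝ) / 2) ^ k / (k : ℝ) ^ k := by
        rw [div_pow, div_pow, mul_pow, div_div]
    _ ≤ ((n + 1 - k : ℕ) : ℝ) ^ k / k.factorial := by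
        gcongr
        exact_mod_cast k.factorial_le_pow
    _ ≤ n.choose k := Nat.pow_le_choose k n

section Binomial

variable {N : ℕ} {α : ℝ}

lemma binomialWeight_nonneg (h0 : 0 ≤ α) (h1 : α ≤ 1) (k : ℕ) : 0 ≤ binomialWeight N α k := by
  have : 0 ≤ 1 - α := by linarith
  unfold binomialWeight
  positivity

lemma binomialMoment_nonneg (h0 : 0 ≤ α) (h1 : α ≤ 1) (p : ℕ) : 0 ≤ binomialMoment N α p :=
  sum_nonneg fun k _ => mul_nonneg (by positivity) (binomialWeight_nonneg h0 h1 k)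

lemma binomialWeight_eq_eval_bernsteinPolynomial (N k : ℕ) (α : ℝ) :
    binomialWeight N α k = (bernsteinPolynomial ℝ N k).eval α := by
  simp [binomialWeight, bernsteinPolynomial]

lemma sum_binomialWeight (N : ℕ) (α : ℝ) : ∑ k ∈ range (N + 1), binomialWeight N α k = 1 := by
  simp_rw [binomialWeight_eq_eval_bernsteinPolynomial, ← Polynomial.eval_finsetSum,
    bernsteinPolynomial.sum, Polynomial.eval_one]

lemma sum_mul_binomialWeight (N : ℕ) (α : ℝ) :
    ∑ k ∈ range (N + 1), binomialWeight N α k * k = N * α := by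
  have := congrArg (Polynomial.eval α) (bernsteinPolynomial.sum_smul (R := ℝ) N)
  simpa [Polynomial.eval_finsetSum, binomialWeight_eq_eval_bernsteinPolynomial, mul_comm]
    using this

lemma sum_exp_mul_binomialWeight (N : ℕ) (α l : ℝ) :
    ∑ k ∈ range (N + 1), exp (l * k) * binomialWeight N α k = (1 + α * (exp l - 1)) ^ N := by
  rw [show 1 + α * (exp l - 1) = α * exp l + (1 - α) by ring, add_pow]
  refine sum_congr rfl fun k _ => ?_
  rw [binomialWeight, mul_comm l, exp_nat_mul]
  ring

lemma pow_mul_binomialWeight_le_binomialMoment (h0 : 0 ≤ α) (h1 : α ≤ 1) {k : ℕ} (hk : k ≤ N)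
    (p : ℕ) : (k : ℝ) ^ p * binomialWeight N α k ≤ binomialMoment N α p :=
  single_le_sum (f := fun j : ℕ => (j : ℝ) ^ p * binomialWeight N α j)
    (fun j _ => mul_nonneg (by positivity) (binomialWeight_nonneg h0 h1 j))
    (mem_range.2 (Nat.lt_succ_of_le hk))

lemma mean_pow_le_binomialMoment (h0 : 0 ≤ α) (h1 : α ≤ 1) (p : ℕ) :
    (N * α) ^ p ≤ binomialMoment N α p := by
  have := pow_arith_mean_le_arith_mean_pow (range (N + 1)) (binomialWeight N α) (fun k => k)
    (fun k _ => binomialWeight_nonneg h0 h1 k) (sum_binomialWeight N α)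
    (fun k _ => k.cast_nonneg) p
  rw [sum_mul_binomialWeight] at this
  simpa only [binomialMoment, mul_comm] using this

lemma binomialMoment_le (h0 : 0 ≤ α) (h1 : α ≤ 1) {l : ℝ} (hl : 0 < l) (p : ℕ) :
    binomialMoment N α p ≤ (p / l) ^ p * exp (N * α * (exp l - 1)) := by
  have hbase : 0 ≤ 1 + α * (exp l - 1) := by nlinarith [add_one_le_exp l]
  calc binomialMoment N α p
      ≤ ∑ k ∈ range (N + 1), (p / l) ^ p * exp (l * k) * binomialWeight N α k :=
        sum_le_sum fun k _ => mul_le_mul_of_nonneg_right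
          (pow_le_div_pow_mul_exp k.cast_nonneg hl p) (binomialWeight_nonneg h0 h1 k)
    _ = (p / l) ^ p * (1 + α * (exp l - 1)) ^ N := by
        simp_rw [mul_assoc, ← mul_sum, sum_exp_mul_binomialWeight]
    _ ≤ (p / l) ^ p * exp (α * (exp l - 1)) ^ N := by
        gcongr
        linarith [add_one_le_exp (α * (exp l - 1))]
    _ = (p / l) ^ p * exp (N * α * (exp l - 1)) := by
        rw [← exp_nat_mul, mul_assoc]

lemma le_binomialWeight (h0 : 0 ≤ α) (h1 : α ≤ 1 / 2) {k : ℕ} (hk : 2 * k ≤ N + 2) :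
    (N * α / (2 * k)) ^ k * exp (-(2 * (N * α))) ≤ binomialWeight N α k := by
  calc (N * α / (2 * k)) ^ k * exp (-(2 * (N * α)))
      = ((N : ℝ) / (2 * k)) ^ k * α ^ k * exp (-(2 * α)) ^ N := by
        rw [← exp_nat_mul, mul_div_right_comm, mul_pow]
        ring_nf
    _ ≤ N.choose k * α ^ k * (1 - α) ^ N := by
        gcongr
        · exact Nat.div_two_mul_pow_le_choose hk
        · exact exp_neg_two_mul_le_one_sub h0 h1
    _ ≤ binomialWeight N α k :=
        mul_le_mul_of_nonneg_left (pow_le_pow_of_le_one (by linarith) (by linarith) (by omega))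
          (by positivity)

lemma binomialMoment_le_of_mean_mul_exp_eq (h0 : 0 ≤ α) (h1 : α ≤ 1) {p : ℕ} {L : ℝ}
    (hL : 0 < L) (hμ : N * α * exp L = p) :
    binomialMoment N α p ≤ (exp 1 * p / L) ^ p := by
  have hμ0 : 0 ≤ N * α := by positivity
  calc binomialMoment N α p ≤ (p / L) ^ p * exp (N * α * (exp L - 1)) :=
        binomialMoment_le h0 h1 hL p
    _ ≤ (p / L) ^ p * exp p := by
        gcongr
        linarith
    _ = (exp 1 * p / L) ^ p := by
        rw [← exp_one_pow, mul_div_assoc, mul_pow, mul_comm]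

lemma binomialMoment_le_of_le_exp_mul_mean (h0 : 0 ≤ α) (h1 : α ≤ 1) {p : ℕ} (hp : 0 < p)
    (hμ : p ≤ exp 1 * (N * α)) :
    binomialMoment N α p ≤ (exp (exp (exp 1)) * (N * α)) ^ p := by
  have hμ0 : 0 < N * α := pos_of_mul_pos_right ((Nat.cast_pos.2 hp).trans_le hμ) (exp_pos 1).le
  set l : ℝ := p / (N * α)
  have hl0 : 0 < l := by positivity
  have hle : l ≤ exp 1 := (div_le_iff₀ hμ0).2 hμ
  have hsub : exp l - 1 ≤ l * exp l := by
    have := mul_le_mul_of_nonneg_right (one_sub_le_exp_neg l) (exp_pos l).le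
    rw [← exp_add, neg_add_cancel, exp_zero] at this
    linarith
  calc binomialMoment N α p ≤ (p / l) ^ p * exp (N * α * (exp l - 1)) :=
        binomialMoment_le h0 h1 hl0 p
    _ ≤ (N * α) ^ p * exp (p * exp (exp 1)) := by
        rw [div_div_cancel₀ (Nat.cast_pos.2 hp).ne']
        gcongr _ * exp ?_
        calc N * α * (exp l - 1) ≤ N * α * (l * exp l) := by gcongr
          _ = p * exp l := by rw [← mul_assoc, mul_div_cancel₀ _ hμ0.ne']
          _ ≤ p * exp (exp 1) := by gcongr
    _ = (exp (exp (exp 1)) * (N * α)) ^ p := by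
        rw [exp_nat_mul, mul_pow _ (_ * _), mul_comm]

lemma exp_neg_le_binomialWeight_of_mean_mul_exp_eq {p : ℕ} {L : ℝ} (h0 : 0 ≤ α) (hpN : p < N)
    (hL1 : 1 ≤ L) (hμ : N * α * exp L = p) {k : ℕ} (hk0 : 0 < k) (hkp : 2 * k ≤ p + 1) :
    exp (-((L + 1) * k + p)) ≤ binomialWeight N α k := by
  have hN0 : (0 : ℝ) < N := by exact_mod_cast (Nat.zero_le p).trans_lt hpN
  have hpN' : (p : ℝ) < N := by exact_mod_cast hpN
  have he2 : exp (-1) ≤ 1 / 2 := by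
    rw [exp_neg, inv_le_iff_one_le_mul₀ (exp_pos 1)]
    linarith [add_one_le_exp (1 : ℝ)]
  have hmean : N * α = p * exp (-L) := by
    rw [exp_neg, ← hμ, mul_inv_cancel_right₀ (exp_pos L).ne']
  have h2mean : 2 * (N * α) ≤ p := by
    have : exp (-L) ≤ 1 / 2 := (exp_le_exp.2 (by linarith)).trans he2
    rw [hmean]
    nlinarith
  have hα : α ≤ 1 / 2 := by
    rw [le_div_iff₀ two_pos, ← mul_le_mul_iff_of_pos_left hN0]
    linarith
  have hratio : exp (-(L + 1)) ≤ N * α / (2 * k) := by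
    have hkp' : (2 * k : ℝ) ≤ 2 * p := by exact_mod_cast (show 2 * k ≤ 2 * p by omega)
    rw [hmean, le_div_iff₀ (by positivity), neg_add, exp_add]
    calc exp (-L) * exp (-1) * (2 * k) ≤ exp (-L) * (1 / 2) * (2 * p) := by gcongr
      _ = p * exp (-L) := by ring
  calc exp (-((L + 1) * k + p)) = exp (-(L + 1)) ^ k * exp (-p) := by
        rw [← exp_nat_mul, ← exp_add]
        ring_nf
    _ ≤ (N * α / (2 * k)) ^ k * exp (-(2 * (N * α))) := by gcongr
    _ ≤ binomialWeight N α k := le_binomialWeight h0 hα (by omega)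

lemma le_binomialMoment_of_mean_mul_exp_eq {p : ℕ} {L : ℝ} (h0 : 0 ≤ α) (h1 : α ≤ 1)
    (hpN : p < N) (hL1 : 1 ≤ L) (hLp : L ≤ p) (hμ : N * α * exp L = p) :
    (exp (-5) * p / L) ^ p ≤ binomialMoment N α p := by
  have hL0 : 0 < L := by linarith
  have hp1 : (1 : ℝ) ≤ p := hL1.trans hLp
  set k := ⌈(p : ℝ) / (2 * L)⌉₊
  have hk_ge : (p : ℝ) / (2 * L) ≤ k := Nat.le_ceil _
  have hk_lt : (k : ℝ) < p / (2 * L) + 1 := Nat.ceil_lt_add_one (by positivity)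
  have hpL : (p : ℝ) / (2 * L) ≤ p / 2 := by gcongr; linarith
  have hk0 : 0 < k := Nat.cast_pos.1 (lt_of_lt_of_le (by positivity) hk_ge)
  have h2k : 2 * k ≤ p + 1 := by
    have : (2 * k : ℝ) < p + 2 := by linarith
    exact Nat.lt_succ_iff.1 (by exact_mod_cast this)
  have hexponent : (L + 1) * k ≤ 3 * p := by
    calc (L + 1) * k ≤ (L + 1) * (p / (2 * L) + 1) := by gcongr
      _ = p / 2 + p / (2 * L) + L + 1 := by field_simp; ring
      _ ≤ 3 * p := by linarith
  have hatom : exp (-4) ^ p ≤ binomialWeight N α k := by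
    refine le_trans ?_ (exp_neg_le_binomialWeight_of_mean_mul_exp_eq h0 hpN hL1 hμ hk0 h2k)
    rw [← exp_nat_mul, exp_le_exp]
    linarith
  have he : exp (-5) * 2 ≤ exp (-4) := by
    rw [show (-4 : ℝ) = -5 + 1 by norm_num, exp_add]
    gcongr
    linarith [add_one_le_exp (1 : ℝ)]
  calc (exp (-5) * p / L) ^ p = (exp (-5) * 2 * (p / (2 * L))) ^ p := by
        field_simp
    _ ≤ (exp (-4) * k) ^ p := by gcongr
    _ = k ^ p * exp (-4) ^ p := by rw [mul_pow, mul_comm]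
    _ ≤ k ^ p * binomialWeight N α k := by gcongr
    _ ≤ binomialMoment N α p :=
        pow_mul_binomialWeight_le_binomialMoment h0 h1 (by omega) p

end Binomial

section Transfer

variable {Ω : Type*} [MeasureSpace Ω] {X : Ω → ℝ} {N : ℕ} {α : ℝ}

lemma HasBinomialDist.measure_eq (hB : HasBinomialDist X N α) (k : ℕ) :
    ℙ {ω | X ω = k} = ENNReal.ofReal (binomialWeight N α k) :=
  hB k

variable [IsProbabilityMeasure (ℙ : Measure Ω)]

lemma HasBinomialDist.ae_exists_eq_natCast (hX : Measurable X) (hB : HasBinomialDist X N α)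
    (h0 : 0 ≤ α) (h1 : α ≤ 1) : ∀ᵐ ω, ∃ k ∈ range (N + 1), X ω = k := by
  have hmeas (k : ℕ) : MeasurableSet {ω | X ω = k} := hX (measurableSet_singleton _)
  have hdisj : Set.PairwiseDisjoint (range (N + 1) : Set ℕ) fun k => {ω | X ω = k} :=
    fun i _ j _ hij => Set.disjoint_left.2 fun ω (hi : X ω = i) (hj : X ω = j) =>
      hij (Nat.cast_injective (hi.symm.trans hj))
  have hU : ℙ (⋃ k ∈ range (N + 1), {ω | X ω = k}) = 1 := by
    rw [measure_biUnion_finset hdisj fun k _ => hmeas k, sum_congr rfl fun k _ => hB.measure_eq k,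
      ← ENNReal.ofReal_sum_of_nonneg fun k _ => binomialWeight_nonneg h0 h1 k, sum_binomialWeight,
      ENNReal.ofReal_one]
  have := (mem_ae_iff_prob_eq_one (.biUnion (range (N + 1)).countable_toSet
    fun k _ => hmeas k)).2 hU
  filter_upwards [this] with ω hω
  simpa using hω

lemma HasBinomialDist.integral_comp (hX : Measurable X) (hB : HasBinomialDist X N α)
    (h0 : 0 ≤ α) (h1 : α ≤ 1) (f : ℝ → ℝ) :
    ∫ ω, f (X ω) = ∑ k ∈ range (N + 1), f k * binomialWeight N α k := by
  have hmeas (k : ℕ) : MeasurableSet {ω | X ω = k} := hX (measurableSet_singleton _)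
  have hsimple : (fun ω => f (X ω)) =ᵐ[ℙ]
      fun ω => ∑ k ∈ range (N + 1), {ω | X ω = k}.indicator (fun _ => f k) ω := by
    filter_upwards [hB.ae_exists_eq_natCast hX h0 h1] with ω ⟨k, hk, hXk⟩
    rw [sum_eq_single_of_mem k hk fun j _ hjk => ?_]
    · simp [hXk]
    · simp [hXk, Nat.cast_injective.ne hjk.symm]
  rw [integral_congr_ae hsimple, integral_finsetSum _ fun k _ =>
    (integrable_indicator_iff (hmeas k)).2 (integrableOn_const (measure_ne_top _ _))]
  refine sum_congr rfl fun k _ => ?_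
  rw [integral_indicator_const _ (hmeas k), measureReal_def, hB.measure_eq,
    ENNReal.toReal_ofReal (binomialWeight_nonneg h0 h1 k), smul_eq_mul, mul_comm]

lemma HasBinomialDist.pnorm_eq (hX : Measurable X) (hB : HasBinomialDist X N α)
    (h0 : 0 ≤ α) (h1 : α ≤ 1) (p : ℕ) :
    pnorm X p = binomialMoment N α p ^ (p : ℝ)⁻¹ := by
  rw [pnorm, hB.integral_comp hX h0 h1 fun x => |x| ^ (p : ℝ), one_div, binomialMoment]
  congr 1
  refine sum_congr rfl fun k _ => ?_
  rw [abs_of_nonneg k.cast_nonneg, rpow_natCast]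

lemma HasBinomialDist.le_pnorm (hX : Measurable X) (hB : HasBinomialDist X N α)
    (h0 : 0 ≤ α) (h1 : α ≤ 1) {p : ℕ} (hp : 0 < p) {C : ℝ} (hC : 0 ≤ C)
    (h : C ^ p ≤ binomialMoment N α p) : C ≤ pnorm X p := by
  rwa [hB.pnorm_eq hX h0 h1, le_rpow_inv_iff_of_pos hC (binomialMoment_nonneg h0 h1 p)
    (Nat.cast_pos.2 hp), rpow_natCast]

lemma HasBinomialDist.pnorm_le (hX : Measurable X) (hB : HasBinomialDist X N α)
    (h0 : 0 ≤ α) (h1 : α ≤ 1) {p : ℕ} (hp : 0 < p) {C : ℝ} (hC : 0 ≤ C)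
    (h : binomialMoment N α p ≤ C ^ p) : pnorm X p ≤ C := by
  rwa [hB.pnorm_eq hX h0 h1, rpow_inv_le_iff_of_pos (binomialMoment_nonneg h0 h1 p) hC
    (Nat.cast_pos.2 hp), rpow_natCast]

end Transfer

theorem binomial_two_sided_moment_bound :
    ∃ c₁ c₂ : ℝ, 0 < c₁ ∧ 0 < c₂ ∧
      ∀ (Ω : Type) [MeasureSpace Ω] [IsProbabilityMeasure (ℙ : Measure Ω)]
        (s m : ℕ), 0 < s → s ≤ m →
        ∀ (X : Ω → ℝ), Measurable X → HasBinomialDist X s ((s : ℝ) / m) →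
        ∀ p : ℕ, 1 ≤ p → p < s →
          (m : ℝ) / s ^ 2 ≤ Real.exp p / p →
          ((Real.exp 1 / p ≤ (m : ℝ) / s ^ 2 →
            c₁ * p / Real.log ((m : ℝ) / s ^ 2 * p) ≤ pnorm X p ∧
              pnorm X p ≤ c₂ * p / Real.log ((m : ℝ) / s ^ 2 * p)) ∧
          ((m : ℝ) / s ^ 2 < Real.exp 1 / p →
            c₁ / ((m : ℝ) / s ^ 2) ≤ pnorm X p ∧
              pnorm X p ≤ c₂ / ((m : ℝ) / s ^ 2))) := by
  refine ⟨exp (-5), exp (exp (exp 1)), exp_pos _, exp_pos _, ?_⟩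
  intro Ω _ _ s m hs hsm X hX hB p hp hps hBp
  have hs0 : (0 : ℝ) < s := by exact_mod_cast hs
  have hm0 : (0 : ℝ) < m := hs0.trans_le (by exact_mod_cast hsm)
  have hp0 : (0 : ℝ) < p := by exact_mod_cast hp
  have hα0 : 0 ≤ (s : ℝ) / m := by positivity
  have hα1 : (s : ℝ) / m ≤ 1 := (div_le_one hm0).2 (by exact_mod_cast hsm)
  have hB_inv : (m : ℝ) / s ^ 2 = (s * (s / m : ℝ))⁻¹ := by field_simp
  have hec : exp 1 ≤ exp (exp (exp 1)) := by gcongr; exact one_le_exp (exp_pos 1).le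
  refine ⟨fun h => ?_, fun h => ?_⟩
  · have hBp0 : 0 < (m : ℝ) / s ^ 2 * p := by positivity
    set L := log ((m : ℝ) / s ^ 2 * p)
    have hL : s * (s / m : ℝ) * exp L = p := by rw [exp_log hBp0, hB_inv]; field_simp
    have hL1 : 1 ≤ L := (le_log_iff_exp_le hBp0).2 ((div_le_iff₀ hp0).1 h)
    have hLp : L ≤ p := (log_le_iff_le_exp hBp0).2 ((le_div_iff₀ hp0).1 hBp)
    refine ⟨hB.le_pnorm hX hα0 hα1 hp (by positivity)
      (le_binomialMoment_of_mean_mul_exp_eq hα0 hα1 hps hL1 hLp hL), ?_⟩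
    refine (hB.pnorm_le hX hα0 hα1 hp (by positivity)
      (binomialMoment_le_of_mean_mul_exp_eq hα0 hα1 (by linarith) hL)).trans ?_
    gcongr
  · have hμ0 : 0 < s * (s / m : ℝ) := by positivity
    rw [hB_inv, lt_div_iff₀ hp0, inv_mul_eq_div, div_lt_iff₀ hμ0] at h
    rw [hB_inv, div_inv_eq_mul, div_inv_eq_mul]
    have hc₁ : exp (-5) * (s * (s / m : ℝ)) ≤ s * (s / m : ℝ) :=
      mul_le_of_le_one_left hμ0.le (exp_le_one_iff.2 (by norm_num))
    exact ⟨hB.le_pnorm hX hα0 hα1 hp (by positivity)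
        ((pow_le_pow_left₀ (by positivity) hc₁ p).trans (mean_pow_le_binomialMoment hα0 hα1 p)),
      hB.pnorm_le hX hα0 hα1 hp (by positivity)
        (binomialMoment_le_of_le_exp_mul_mean hα0 hα1 hp h.le)⟩
end
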